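/- Symmetric Gaussian mixture phase transition, impossibility for c > 1/2: for every ε ∈ (0, 1-c), letting Δ = c√(2 log(1/δ)) and t = (1-c-ε)√(2 log(1/δ)), for all sufficiently small δ > 0 one has P(ξ ≥ Δ+t)/(P(ξ ≥ Δ+t) + P(ξ ≥ t-Δ)) ≥ δ, and hence the optimal indecision mass γ_δ satisfies γ_δ ≥ δ^{(2c-1+ε)²}/(√(2π)((2c-1+ε)√(2 log(1/δ))+1)) - δ^{1-ε}/((1-ε)√(4π log(1/δ))). -/

import Mathlib

open MeasureTheory Real Set

/-- Standard Gaussian tail `P(ξ ≥ t)`. -/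
noncomputable def gaussTail (t : ℝ) : ℝ :=
  ∫ x in Ici t, Real.exp (-x ^ 2 / 2) / Real.sqrt (2 * π)


open Filter Topology

lemma expsq_integrable : Integrable (fun x : ℝ => Real.exp (-x ^ 2 / 2)) := by
  have := integrable_exp_neg_mul_sq (b := (1/2 : ℝ)) (by norm_num)
  convert this using 2 with x
  ring_nf

lemma expsq_tendsto : Tendsto (fun u : ℝ => Real.exp (-u ^ 2 / 2)) atTop (𝓝 0) := by
  apply Real.tendsto_exp_atBot.comp
  have h : Tendsto (fun u : ℝ => u ^ 2 / 2) atTop atTop :=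
    (tendsto_pow_atTop (by norm_num)).atTop_div_const (by norm_num)
  simpa [neg_div] using tendsto_neg_atBot_iff.mpr h

lemma neg_expsq_hasDerivAt (u : ℝ) :
    HasDerivAt (fun u : ℝ => -Real.exp (-u ^ 2 / 2)) (u * Real.exp (-u ^ 2 / 2)) u := by
  have h : HasDerivAt (fun u : ℝ => -u ^ 2 / 2) (-u) u := by
    have := ((hasDerivAt_pow 2 u).neg).div_const 2
    simpa using this.congr_deriv (by ring)
  have := (h.exp).neg
  exact this.congr_deriv (by ring)

lemma gaussTail_eq (t : ℝ) :
    gaussTail t = (∫ x in Ioi t, Real.exp (-x ^ 2 / 2)) / Real.sqrt (2 * π) := by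
  rw [gaussTail, integral_Ici_eq_integral_Ioi, integral_div]

lemma gaussTail_pos (t : ℝ) : 0 < gaussTail t := by
  rw [gaussTail]
  rw [setIntegral_pos_iff_support_of_nonneg_ae]
  · have : Function.support (fun x : ℝ => Real.exp (-x ^ 2 / 2) / Real.sqrt (2 * π)) = univ := by
      ext x
      simp only [Function.support, mem_setOf_eq, mem_univ, iff_true]
      have : Real.sqrt (2 * π) ≠ 0 := ne_of_gt (Real.sqrt_pos.mpr (by positivity))
      exact div_ne_zero (Real.exp_ne_zero _) this
    rw [this]
    simp
  · filter_upwards with x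
    positivity
  · exact (expsq_integrable.div_const _).integrableOn

lemma gaussTail_anti {a b : ℝ} (h : a ≤ b) : gaussTail b ≤ gaussTail a := by
  rw [gaussTail, gaussTail]
  apply setIntegral_mono_set ((expsq_integrable.div_const _).integrableOn)
  · filter_upwards with x; positivity
  · exact HasSubset.Subset.eventuallyLE (Ici_subset_Ici.mpr h)

lemma gaussTail_le_one (t : ℝ) : gaussTail t ≤ 1 := by
  rw [gaussTail]
  have h1 : ∫ x in Ici t, Real.exp (-x ^ 2 / 2) / Real.sqrt (2 * π) ≤
      ∫ x : ℝ, Real.exp (-x ^ 2 / 2) / Real.sqrt (2 * π) := by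
    apply setIntegral_le_integral (expsq_integrable.div_const _)
    filter_upwards with x; positivity
  have h2 : ∫ x : ℝ, Real.exp (-x ^ 2 / 2) / Real.sqrt (2 * π) = 1 := by
    rw [integral_div]
    have : ∫ x : ℝ, Real.exp (-x ^ 2 / 2) = Real.sqrt (2 * π) := by
      have := integral_gaussian (1/2 : ℝ)
      have heq : ∀ x : ℝ, Real.exp (-(1/2 : ℝ) * x ^ 2) = Real.exp (-x ^ 2 / 2) := by
        intro x; ring_nf
      rw [show (fun x : ℝ => Real.exp (-x ^ 2 / 2)) = fun x : ℝ => Real.exp (-(1/2 : ℝ) * x ^ 2) by ext x; rw [heq], this]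
      rw [show π / (1/2 : ℝ) = 2 * π by ring]
    rw [this, div_self (ne_of_gt (Real.sqrt_pos.mpr (by positivity)))]
  linarith

lemma integral_mul_expsq (x : ℝ) (hx : 0 ≤ x) :
    ∫ u in Ioi x, u * Real.exp (-u ^ 2 / 2) = Real.exp (-x ^ 2 / 2) := by
  have := integral_Ioi_of_hasDerivAt_of_nonneg' (a := x)
    (g := fun u : ℝ => -Real.exp (-u ^ 2 / 2))
    (g' := fun u : ℝ => u * Real.exp (-u ^ 2 / 2)) (l := 0)
    (fun u _ => neg_expsq_hasDerivAt u)
    (fun u hu => by have : (0:ℝ) ≤ u := le_trans hx (le_of_lt hu); positivity)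
    (by simpa using expsq_tendsto.neg)
  simpa using this

lemma gaussTail_upper {x : ℝ} (hx : 0 < x) :
    gaussTail x ≤ Real.exp (-x ^ 2 / 2) / (Real.sqrt (2 * π) * x) := by
  have hInt : IntegrableOn (fun u : ℝ => u * Real.exp (-u ^ 2 / 2)) (Ioi x) := by
    apply integrableOn_Ioi_deriv_of_nonneg' (l := 0)
      (fun u _ => neg_expsq_hasDerivAt u)
      (fun u hu => by have : (0:ℝ) ≤ u := le_trans hx.le (le_of_lt hu); positivity)
    simpa using expsq_tendsto.neg
  have hmono : ∫ u in Ioi x, Real.exp (-u ^ 2 / 2) ≤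
      ∫ u in Ioi x, u * Real.exp (-u ^ 2 / 2) / x := by
    apply setIntegral_mono_on expsq_integrable.integrableOn (hInt.div_const x) measurableSet_Ioi
    intro u hu
    rw [le_div_iff₀ hx]
    have : (0:ℝ) < u := lt_trans hx hu
    nlinarith [Real.exp_pos (-u ^ 2 / 2), (le_of_lt hu : x ≤ u)]
  have hval : ∫ u in Ioi x, u * Real.exp (-u ^ 2 / 2) / x = Real.exp (-x ^ 2 / 2) / x := by
    rw [integral_div, integral_mul_expsq x hx.le]
  rw [gaussTail_eq]
  rw [hval] at hmono
  rw [div_le_div_iff₀ (Real.sqrt_pos.mpr (by positivity)) (by positivity)]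
  calc (∫ u in Ioi x, Real.exp (-u ^ 2 / 2)) * (Real.sqrt (2 * π) * x)
      ≤ (Real.exp (-x ^ 2 / 2) / x) * (Real.sqrt (2 * π) * x) := by
        apply mul_le_mul_of_nonneg_right hmono (by positivity)
    _ = Real.exp (-x ^ 2 / 2) * Real.sqrt (2 * π) := by field_simp

lemma gaussTail_lower {x : ℝ} (hx : 0 ≤ x) :
    Real.exp (-x ^ 2 / 2) / (Real.sqrt (2 * π) * (x + 1)) ≤ gaussTail x := by
  set g' : ℝ → ℝ := fun u =>
    (u * Real.exp (-u ^ 2 / 2) * (u + 1) - -Real.exp (-u ^ 2 / 2) * 1) / (u + 1) ^ 2 with hg'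
  have hderiv : ∀ u ∈ Ici x, HasDerivAt (fun u : ℝ => -Real.exp (-u ^ 2 / 2) / (u + 1)) (g' u) u := by
    intro u hu
    have hu0 : (0:ℝ) ≤ u := le_trans hx hu
    exact (neg_expsq_hasDerivAt u).div
      (by simpa using (hasDerivAt_id u).add_const 1) (by positivity)
  have hpos : ∀ u ∈ Ioi x, 0 ≤ g' u := by
    intro u hu
    have hu0 : (0:ℝ) ≤ u := le_trans hx (le_of_lt hu)
    rw [hg']
    have h1 : 0 ≤ u * Real.exp (-u ^ 2 / 2) * (u + 1) - -Real.exp (-u ^ 2 / 2) * 1 := by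
      nlinarith [Real.exp_pos (-u ^ 2 / 2)]
    positivity
  have htend : Tendsto (fun u : ℝ => -Real.exp (-u ^ 2 / 2) / (u + 1)) atTop (𝓝 0) := by
    have h1 : Tendsto (fun u : ℝ => (u + 1)⁻¹) atTop (𝓝 0) :=
      tendsto_inv_atTop_zero.comp (tendsto_atTop_add_const_right _ 1 tendsto_id)
    have := (expsq_tendsto.neg).mul h1
    simpa [div_eq_mul_inv] using this
  have hInt : IntegrableOn g' (Ioi x) :=
    integrableOn_Ioi_deriv_of_nonneg' hderiv hpos htend
  have hval : ∫ u in Ioi x, g' u = Real.exp (-x ^ 2 / 2) / (x + 1) := by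
    have := integral_Ioi_of_hasDerivAt_of_nonneg' hderiv hpos htend
    rw [this]
    field_simp
    ring
  have hmono : ∫ u in Ioi x, g' u ≤ ∫ u in Ioi x, Real.exp (-u ^ 2 / 2) := by
    apply setIntegral_mono_on hInt expsq_integrable.integrableOn measurableSet_Ioi
    intro u hu
    have hu0 : (0:ℝ) ≤ u := le_trans hx (le_of_lt hu)
    rw [hg', div_le_iff₀ (by positivity)]
    nlinarith [Real.exp_pos (-u ^ 2 / 2)]
  rw [hval] at hmono
  rw [gaussTail_eq]
  rw [div_le_div_iff₀ (by positivity) (Real.sqrt_pos.mpr (by positivity))]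
  calc Real.exp (-x ^ 2 / 2) * Real.sqrt (2 * π)
      = (Real.exp (-x ^ 2 / 2) / (x + 1)) * (Real.sqrt (2 * π) * (x + 1)) := by
        field_simp
    _ ≤ (∫ u in Ioi x, Real.exp (-u ^ 2 / 2)) * (Real.sqrt (2 * π) * (x + 1)) := by
        apply mul_le_mul_of_nonneg_right hmono (by positivity)

lemma exp_ge_quarter_sq {y : ℝ} (hy : 0 ≤ y) : y ^ 2 / 4 ≤ Real.exp y := by
  have h1 : y / 2 + 1 ≤ Real.exp (y / 2) := Real.add_one_le_exp (y / 2)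
  have h2 : Real.exp y = Real.exp (y / 2) * Real.exp (y / 2) := by
    rw [← Real.exp_add]; ring_nf
  nlinarith [Real.exp_pos (y / 2)]

lemma bigL (ε : ℝ) (hε : 0 < ε) :
    ∃ L₀ : ℝ, 1 ≤ L₀ ∧ ∀ L : ℝ, L₀ ≤ L →
      16 * Real.sqrt (2 * π) * L ≤ Real.exp (ε * L) := by
  refine ⟨max 1 (64 * Real.sqrt (2 * π) / ε ^ 2), le_max_left _ _, fun L hL => ?_⟩
  have hL1 : 1 ≤ L := le_trans (le_max_left _ _) hL
  have hL2 : 64 * Real.sqrt (2 * π) / ε ^ 2 ≤ L := le_trans (le_max_right _ _) hL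
  have hL2' : 64 * Real.sqrt (2 * π) ≤ ε ^ 2 * L := by
    rw [div_le_iff₀ (by positivity)] at hL2; linarith
  have h0 : 0 ≤ ε * L := by positivity
  have := exp_ge_quarter_sq h0
  nlinarith [Real.sqrt_nonneg (2 * π)]


lemma aux_C1 (ε δ L s : ℝ) (hε : 0 < ε) (hε2 : ε < 1/2) (hδpos : 0 < δ)
    (hL1 : 1 ≤ L) (hs2 : s ^ 2 = 2 * L) (hsnn : 0 ≤ s)
    (hδeq : Real.exp (-L) = δ) (hlogδ : Real.log δ = -L)
    (hkeyL : 16 * Real.sqrt (2 * π) * L ≤ Real.exp (ε * L)) :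
    δ * (4 * (Real.sqrt (2 * π) * ((1 - ε) * s + 1))) ≤ δ ^ ((1 - ε) ^ 2 : ℝ) := by
  have hsle : s ≤ 2 * L := by nlinarith
  have h1 : (1 - ε) * s + 1 ≤ 4 * L := by nlinarith
  have h2 : 4 * (Real.sqrt (2 * π) * ((1 - ε) * s + 1)) ≤ 16 * Real.sqrt (2 * π) * L := by
    nlinarith [Real.sqrt_nonneg (2 * π)]
  have h3 : Real.exp (ε * L) ≤ Real.exp ((2 * ε - ε ^ 2) * L) := by
    apply Real.exp_le_exp.mpr
    nlinarith [mul_nonneg (mul_nonneg hε.le (by linarith : (0:ℝ) ≤ 1 - ε))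
      (by linarith : (0:ℝ) ≤ L)]
  have h4 : 4 * (Real.sqrt (2 * π) * ((1 - ε) * s + 1)) ≤ Real.exp ((2 * ε - ε ^ 2) * L) :=
    le_trans (le_trans h2 hkeyL) h3
  calc δ * (4 * (Real.sqrt (2 * π) * ((1 - ε) * s + 1)))
      ≤ δ * Real.exp ((2 * ε - ε ^ 2) * L) := mul_le_mul_of_nonneg_left h4 hδpos.le
    _ = δ ^ ((1 - ε) ^ 2 : ℝ) := by
        rw [Real.rpow_def_of_pos hδpos, hlogδ, ← hδeq, ← Real.exp_add]
        congr 1; ring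

lemma aux_C2 (ε δ L : ℝ) (hε : 0 < ε) (hε2 : ε < 1/2) (hδpos : 0 < δ)
    (hL1 : 1 ≤ L)
    (hδeq : Real.exp (-L) = δ) (hlogδ : Real.log δ = -L)
    (hkeyL : 16 * Real.sqrt (2 * π) * L ≤ Real.exp (ε * L)) :
    2 * δ ≤ δ ^ ((1 - ε) : ℝ) / ((1 - ε) * Real.sqrt (4 * π * L)) := by
  have hsq2pi : (1:ℝ) ≤ Real.sqrt (2 * π) := by
    rw [show (1:ℝ) = Real.sqrt 1 by simp]
    exact Real.sqrt_le_sqrt (by nlinarith [pi_gt_three])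
  have hd : 0 < (1 - ε) * Real.sqrt (4 * π * L) := by
    apply mul_pos (by linarith) (Real.sqrt_pos.mpr (by positivity))
  rw [le_div_iff₀ hd]
  have hsq : Real.sqrt (4 * π * L) ≤ 4 * L := by
    rw [show (4:ℝ) * L = Real.sqrt ((4 * L) ^ 2) by rw [Real.sqrt_sq (by positivity)]]
    apply Real.sqrt_le_sqrt
    nlinarith [pi_le_four]
  have h5 : 2 * ((1 - ε) * Real.sqrt (4 * π * L)) ≤ Real.exp (ε * L) := by
    have h6 : 2 * ((1 - ε) * Real.sqrt (4 * π * L)) ≤ 8 * L := by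
      nlinarith [Real.sqrt_nonneg (4 * π * L)]
    calc 2 * ((1 - ε) * Real.sqrt (4 * π * L)) ≤ 8 * L := h6
      _ ≤ 16 * Real.sqrt (2 * π) * L := by nlinarith
      _ ≤ Real.exp (ε * L) := hkeyL
  calc 2 * δ * ((1 - ε) * Real.sqrt (4 * π * L))
      ≤ δ * Real.exp (ε * L) := by nlinarith [Real.exp_pos (ε * L)]
    _ = δ ^ ((1 - ε) : ℝ) := by
        rw [Real.rpow_def_of_pos hδpos, hlogδ, ← hδeq, ← Real.exp_add]; congr 1; ring

/-- Impossibility side of the sharp phase transition for `c > 1/2`: for every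
`ε ∈ (0, 1-c)`, with `Δ = c√(2 log(1/δ))` and `t = (1-c-ε)√(2 log(1/δ))`, for all
sufficiently small `δ > 0` the conditional misclassification at half-width `t` is
at least `δ`, and hence the optimal indecision mass `γ_δ` (determined by any
half-width `t_δ ≥ 0` enforcing conditional misclassification exactly `δ`) satisfies
`γ_δ ≥ δ^{(2c-1+ε)²}/(√(2π)((2c-1+ε)√(2 log(1/δ))+1)) - δ^{1-ε}/((1-ε)√(4π log(1/δ)))`. -/
theorem gaussian_phase_transition_impossibility (c ε : ℝ)
    (hc : 1 / 2 < c) (hc1 : c < 1) (hε : 0 < ε) (hε1 : ε < 1 - c) :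
    ∃ δ₀ : ℝ, 0 < δ₀ ∧ ∀ δ : ℝ, 0 < δ → δ < δ₀ →
      (δ ≤
        gaussTail (c * Real.sqrt (2 * Real.log (1 / δ)) +
            (1 - c - ε) * Real.sqrt (2 * Real.log (1 / δ))) /
          (gaussTail (c * Real.sqrt (2 * Real.log (1 / δ)) +
              (1 - c - ε) * Real.sqrt (2 * Real.log (1 / δ))) +
            gaussTail ((1 - c - ε) * Real.sqrt (2 * Real.log (1 / δ)) -
              c * Real.sqrt (2 * Real.log (1 / δ))))) ∧
      (∀ tδ γδ : ℝ, 0 ≤ tδ →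
        gaussTail (c * Real.sqrt (2 * Real.log (1 / δ)) + tδ) /
          (gaussTail (c * Real.sqrt (2 * Real.log (1 / δ)) + tδ) +
            gaussTail (tδ - c * Real.sqrt (2 * Real.log (1 / δ)))) = δ →
        γδ = gaussTail (c * Real.sqrt (2 * Real.log (1 / δ)) - tδ) -
              gaussTail (c * Real.sqrt (2 * Real.log (1 / δ)) + tδ) →
        δ ^ ((2 * c - 1 + ε) ^ 2) /
            (Real.sqrt (2 * π) *
              ((2 * c - 1 + ε) * Real.sqrt (2 * Real.log (1 / δ)) + 1)) -
          δ ^ (1 - ε) / ((1 - ε) * Real.sqrt (4 * π * Real.log (1 / δ))) ≤ γδ) := by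
  obtain ⟨L₀, hL₀1, hkey⟩ := bigL ε hε
  refine ⟨min (1/2) (Real.exp (-L₀)), lt_min (by norm_num) (Real.exp_pos _), ?_⟩
  intro δ hδpos hδlt
  have hδhalf : δ < 1/2 := lt_of_lt_of_le hδlt (min_le_left _ _)
  have hδexp : δ < Real.exp (-L₀) := lt_of_lt_of_le hδlt (min_le_right _ _)
  set L := Real.log (1 / δ) with hLdef
  set s := Real.sqrt (2 * L) with hsdef
  have hlogδ : Real.log δ = -L := by rw [hLdef, one_div, Real.log_inv, neg_neg]
  have hL0 : L₀ ≤ L := by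
    have := Real.log_lt_log hδpos hδexp
    rw [Real.log_exp] at this
    linarith [hlogδ ▸ this]
  have hL1 : (1:ℝ) ≤ L := le_trans hL₀1 hL0
  have hLpos : (0:ℝ) < L := by linarith
  have hδeq : Real.exp (-L) = δ := by rw [← hlogδ, Real.exp_log hδpos]
  have hrpow : ∀ a : ℝ, δ ^ a = Real.exp (-(a * L)) := by
    intro a
    rw [Real.rpow_def_of_pos hδpos, hlogδ]; ring_nf
  have hε2 : ε < 1/2 := by linarith
  have hs2 : s ^ 2 = 2 * L := Real.sq_sqrt (by positivity)
  have hsnn : 0 ≤ s := Real.sqrt_nonneg _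
  have hspos : 0 < s := Real.sqrt_pos.mpr (by positivity)
  clear_value s
  clear_value L
  have hsqrt2pi : (1:ℝ) ≤ Real.sqrt (2 * π) := by
    rw [show (1:ℝ) = Real.sqrt 1 by simp]
    exact Real.sqrt_le_sqrt (by nlinarith [pi_gt_three])
  have hkeyL : 16 * Real.sqrt (2 * π) * L ≤ Real.exp (ε * L) := hkey L hL0
  have hC1 : δ * (4 * (Real.sqrt (2 * π) * ((1 - ε) * s + 1))) ≤ δ ^ ((1 - ε) ^ 2 : ℝ) :=
    aux_C1 ε δ L s hε hε2 hδpos hL1 hs2 hsnn hδeq hlogδ hkeyL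
  have hC2 : 2 * δ ≤ δ ^ ((1 - ε) : ℝ) / ((1 - ε) * Real.sqrt (4 * π * L)) :=
    aux_C2 ε δ L hε hε2 hδpos hL1 hδeq hlogδ hkeyL
  -- lower bound on gaussTail ((1-ε) s)
  have hA4 : 4 * δ ≤ gaussTail ((1 - ε) * s) := by
    have hx0 : 0 ≤ (1 - ε) * s := mul_nonneg (by linarith) hsnn
    have hlow := gaussTail_lower hx0
    have hexpeq : Real.exp (-((1 - ε) * s) ^ 2 / 2) = δ ^ ((1 - ε) ^ 2 : ℝ) := by
      rw [hrpow]
      congr 1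
      rw [mul_pow, hs2]; ring
    rw [hexpeq] at hlow
    have hdpos : 0 < Real.sqrt (2 * π) * ((1 - ε) * s + 1) := by
      apply mul_pos (by linarith) (by positivity)
    have : 4 * δ ≤ δ ^ ((1 - ε) ^ 2 : ℝ) / (Real.sqrt (2 * π) * ((1 - ε) * s + 1)) := by
      rw [le_div_iff₀ hdpos]
      calc 4 * δ * (Real.sqrt (2 * π) * ((1 - ε) * s + 1))
          = δ * (4 * (Real.sqrt (2 * π) * ((1 - ε) * s + 1))) := by ring
        _ ≤ δ ^ ((1 - ε) ^ 2 : ℝ) := hC1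
    linarith
  have harg : c * s + (1 - c - ε) * s = (1 - ε) * s := by ring
  constructor
  · -- part 1
    rw [harg]
    set A := gaussTail ((1 - ε) * s) with hAdef
    set B := gaussTail ((1 - c - ε) * s - c * s) with hBdef
    have hA : 0 < A := gaussTail_pos _
    have hB : 0 < B := gaussTail_pos _
    have hB1 : B ≤ 1 := gaussTail_le_one _
    clear_value A B
    rw [le_div_iff₀ (by linarith)]
    have e0 : δ * (A + B) = δ * A + δ * B := by ring
    have e1 : δ * B ≤ δ := mul_le_of_le_one_right hδpos.le hB1
    have e2 : δ * A ≤ (1/2) * A := mul_le_mul_of_nonneg_right hδhalf.le hA.le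
    linarith
  · -- part 2
    intro tδ γδ htδ hmis hγ
    set A' := gaussTail (c * s + tδ) with hA'def
    set B' := gaussTail (tδ - c * s) with hB'def
    have hA'pos : 0 < A' := gaussTail_pos _
    have hB'pos : 0 < B' := gaussTail_pos _
    have hB'1 : B' ≤ 1 := gaussTail_le_one _
    rw [div_eq_iff (by linarith : A' + B' ≠ 0)] at hmis
    have hA'le : A' ≤ 2 * δ := by
      have e1 : δ * B' ≤ δ := mul_le_of_le_one_right hδpos.le hB'1
      have e2 : δ * A' ≤ (1/2) * A' := mul_le_mul_of_nonneg_right hδhalf.le hA'pos.le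
      have e0 : δ * (A' + B') = δ * A' + δ * B' := by ring
      linarith
    have htδge : (1 - c - ε) * s ≤ tδ := by
      by_contra h
      push_neg at h
      have h1 : c * s + tδ ≤ (1 - ε) * s := by
        have : (1 - ε) * s = c * s + (1 - c - ε) * s := by ring
        linarith
      have h2 : gaussTail ((1 - ε) * s) ≤ A' := gaussTail_anti h1
      linarith
    -- first term lower bound
    have hxpos : 0 ≤ (2 * c - 1 + ε) * s := by
      apply mul_nonneg (by linarith) hsnn
    have hterm1 : δ ^ ((2 * c - 1 + ε) ^ 2 : ℝ) /
        (Real.sqrt (2 * π) * ((2 * c - 1 + ε) * s + 1)) ≤ gaussTail (c * s - tδ) := by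
      have h1 : c * s - tδ ≤ (2 * c - 1 + ε) * s := by
        have : (2 * c - 1 + ε) * s = c * s - (1 - c - ε) * s := by ring
        linarith
      have h2 := gaussTail_anti h1
      have hlow := gaussTail_lower hxpos
      have hexpeq : Real.exp (-((2 * c - 1 + ε) * s) ^ 2 / 2) =
          δ ^ ((2 * c - 1 + ε) ^ 2 : ℝ) := by
        rw [hrpow]
        congr 1
        rw [mul_pow, hs2]; ring
      rw [hexpeq] at hlow
      linarith
    -- second term
    have hterm2 : A' ≤ δ ^ ((1 - ε) : ℝ) / ((1 - ε) * Real.sqrt (4 * π * L)) :=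
      le_trans hA'le hC2
    rw [hγ]
    linarith
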